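/- arXiv:1701.07204 — 2 statements merged into one kernel-verified Lean document; each statement's English description precedes it below -/
import Mathlib

section
/- Let x_1 ≤ x_2 ≤ … ≤ x_n be real numbers, let i ≥ 2, and define the n × n matrix C_i by C_i[m][j] = D_{i−1}(min{j−1, m}) + CC(j, m), where D_{i−1}(p) is the minimum cost of partitioning x_1, …, x_p into at most i−1 consecutive groups (each charged its squared-distance cluster cost) and CC(j,m) = 0 when j > m. Then C_i is totally monotone with respect to row minima: for all row indices a < b and column indices u < v, if C_i[a][v] < C_i[a][u] then C_i[b][v] < C_i[b][u]. -/
/-- The squared-distance cluster cost of grouping `x_i, …, x_j` into one cluster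
with the optimal centroid (the arithmetic mean); `0` when `i > j`. -/
noncomputable def clusterCost (x : ℕ → ℝ) (i j : ℕ) : ℝ :=
  ∑ ℓ ∈ Finset.Icc i j,
    (x ℓ - (∑ t ∈ Finset.Icc i j, x t) / ((Finset.Icc i j).card : ℝ)) ^ 2

/-- `kCost x i m` is the minimum cost of partitioning `x_1, …, x_m` into at most
`i` consecutive groups, each charged its squared-distance cluster cost.  A
partition is encoded by monotone boundaries `0 = b 0 ≤ b 1 ≤ … ≤ b i = m`, the
`t`-th group being `x_{b t + 1}, …, x_{b (t+1)}` (possibly empty). -/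
noncomputable def kCost (x : ℕ → ℝ) (i m : ℕ) : ℝ :=
  sInf { c : ℝ | ∃ b : ℕ → ℕ, Monotone b ∧ b 0 = 0 ∧ b i = m ∧
    c = ∑ t ∈ Finset.range i, clusterCost x (b t + 1) (b (t + 1)) }

lemma sum_sq_expand (x : ℕ → ℝ) (F : Finset ℕ) (c : ℝ) :
    ∑ ℓ ∈ F, (x ℓ - c) ^ 2
      = ∑ ℓ ∈ F, (x ℓ) ^ 2 - 2 * c * (∑ ℓ ∈ F, x ℓ) + (F.card : ℝ) * c ^ 2 := by
  have h : ∀ ℓ, (x ℓ - c) ^ 2 = (x ℓ) ^ 2 - 2 * c * x ℓ + c ^ 2 := fun ℓ => by ring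
  simp_rw [h]
  rw [Finset.sum_add_distrib, Finset.sum_sub_distrib, ← Finset.mul_sum, Finset.sum_const,
    nsmul_eq_mul]

lemma CC_alt (x : ℕ → ℝ) (i j : ℕ) :
    clusterCost x i j = ∑ ℓ ∈ Finset.Icc i j, (x ℓ) ^ 2
      - (∑ ℓ ∈ Finset.Icc i j, x ℓ) ^ 2 / ((Finset.Icc i j).card : ℝ) := by
  rcases Nat.eq_zero_or_pos (Finset.Icc i j).card with h0 | hpos
  · rw [Finset.card_eq_zero] at h0
    simp [clusterCost, h0]
  · rw [clusterCost, sum_sq_expand]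
    set s : ℝ := ((Finset.Icc i j).card : ℝ) with hsdef
    set T : ℝ := ∑ t ∈ Finset.Icc i j, x t with hTdef
    have hs : s ≠ 0 := by
      simp only [hsdef]
      positivity
    field_simp
    ring

lemma CC_nonneg (x : ℕ → ℝ) (i j : ℕ) : 0 ≤ clusterCost x i j := by
  unfold clusterCost; positivity

lemma CC_le_sum (x : ℕ → ℝ) (i j : ℕ) (c : ℝ) :
    clusterCost x i j ≤ ∑ ℓ ∈ Finset.Icc i j, (x ℓ - c) ^ 2 := by
  rcases Nat.eq_zero_or_pos (Finset.Icc i j).card with h0 | hpos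
  · rw [Finset.card_eq_zero] at h0
    simp [clusterCost, h0]
  · rw [CC_alt, sum_sq_expand]
    set s : ℝ := ((Finset.Icc i j).card : ℝ) with hsdef
    set T : ℝ := ∑ t ∈ Finset.Icc i j, x t with hTdef
    have hs : (0:ℝ) < s := by
      simp only [hsdef]
      positivity
    have key : (T - s * c) ^ 2 / s ≥ 0 := by positivity
    have expand : (T - s * c) ^ 2 / s = T ^ 2 / s - 2 * c * T + s * c ^ 2 := by
      field_simp
      ring
    linarith [key, expand.symm.le]

lemma CC_split (x : ℕ → ℝ) {p r s q : ℕ} (hrs : r < s) (hrq : r ≤ q) (hps : p ≤ s) :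
    clusterCost x p r + clusterCost x s q ≤ clusterCost x p q := by
  set c : ℝ := (∑ t ∈ Finset.Icc p q, x t) / ((Finset.Icc p q).card : ℝ) with hc
  have h1 : clusterCost x p r ≤ ∑ ℓ ∈ Finset.Icc p r, (x ℓ - c) ^ 2 := CC_le_sum x p r c
  have h2 : clusterCost x s q ≤ ∑ ℓ ∈ Finset.Icc s q, (x ℓ - c) ^ 2 := CC_le_sum x s q c
  have hdisj : Disjoint (Finset.Icc p r) (Finset.Icc s q) := by
    rw [Finset.disjoint_left]
    intro t ht ht'
    simp only [Finset.mem_Icc] at ht ht'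
    omega
  have hsub : Finset.Icc p r ∪ Finset.Icc s q ⊆ Finset.Icc p q := by
    intro t ht
    simp only [Finset.mem_union, Finset.mem_Icc] at ht ⊢
    omega
  have h3 : ∑ ℓ ∈ Finset.Icc p r, (x ℓ - c) ^ 2 + ∑ ℓ ∈ Finset.Icc s q, (x ℓ - c) ^ 2
      ≤ ∑ ℓ ∈ Finset.Icc p q, (x ℓ - c) ^ 2 := by
    rw [← Finset.sum_union hdisj]
    exact Finset.sum_le_sum_of_subset_of_nonneg hsub (fun t _ _ => by positivity)
  calc clusterCost x p r + clusterCost x s q ≤ ∑ ℓ ∈ Finset.Icc p q, (x ℓ - c) ^ 2 := by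
        linarith
    _ = clusterCost x p q := rfl

lemma CC_succ (x : ℕ → ℝ) {i j : ℕ} (hij : i ≤ j) :
    clusterCost x i (j + 1) = clusterCost x i j
      + (((Finset.Icc i j).card : ℝ) * x (j + 1) - ∑ t ∈ Finset.Icc i j, x t) ^ 2
        / (((Finset.Icc i j).card : ℝ) * (((Finset.Icc i j).card : ℝ) + 1)) := by
  have hins : Finset.Icc i (j + 1) = insert (j + 1) (Finset.Icc i j) :=
    (Finset.insert_Icc_right_eq_Icc_add_one (by omega)).symm
  have hmem : (j + 1) ∉ Finset.Icc i j := by simp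
  have hcard : ((Finset.Icc i (j + 1)).card : ℝ) = ((Finset.Icc i j).card : ℝ) + 1 := by
    rw [hins, Finset.card_insert_of_notMem hmem]
    push_cast
    ring
  have hsum : ∑ t ∈ Finset.Icc i (j + 1), x t = x (j + 1) + ∑ t ∈ Finset.Icc i j, x t := by
    rw [hins, Finset.sum_insert hmem]
  have hsumsq : ∑ t ∈ Finset.Icc i (j + 1), (x t) ^ 2
      = (x (j + 1)) ^ 2 + ∑ t ∈ Finset.Icc i j, (x t) ^ 2 := by
    rw [hins, Finset.sum_insert hmem]
  have hs : (0:ℝ) < ((Finset.Icc i j).card : ℝ) := by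
    have : (Finset.Icc i j).Nonempty := Finset.nonempty_Icc.mpr hij
    have := Finset.card_pos.mpr this
    positivity
  rw [CC_alt, CC_alt, hcard, hsum, hsumsq]
  set s : ℝ := ((Finset.Icc i j).card : ℝ)
  set T : ℝ := ∑ t ∈ Finset.Icc i j, x t
  have h1 : s ≠ 0 := ne_of_gt hs
  have h2 : s + 1 ≠ 0 := by positivity
  field_simp
  ring

set_option maxHeartbeats 1000000 in
lemma marginal_mono (n : ℕ) (x : ℕ → ℝ)
    (hsort : ∀ ⦃p q : ℕ⦄, 1 ≤ p → p ≤ q → q ≤ n → x p ≤ x q)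
    {i i' j : ℕ} (h1 : 1 ≤ i) (h2 : i ≤ i') (h3 : i' ≤ j + 1) (h4 : j + 1 ≤ n) :
    clusterCost x i' (j + 1) - clusterCost x i' j
      ≤ clusterCost x i (j + 1) - clusterCost x i j := by
  rcases eq_or_lt_of_le h3 with rfl | h3'
  · -- i' = j + 1
    have e1 : clusterCost x (j + 1) (j + 1) = 0 := by
      simp [clusterCost]
    have e2 : clusterCost x (j + 1) j = 0 := by
      rw [clusterCost, Finset.Icc_eq_empty (by omega)]
      simp
    have e3 := CC_split x (p := i) (r := j) (s := j + 1) (q := j + 1)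
      (by omega) (by omega) (by omega)
    rw [e1] at e3 ⊢
    rw [e2]
    linarith
  · have hi'j : i' ≤ j := by omega
    have hij : i ≤ j := le_trans h2 hi'j
    rw [CC_succ x hij, CC_succ x hi'j]
    simp only [add_sub_cancel_left]
    set y : ℝ := x (j + 1) with hy
    set s : ℝ := ((Finset.Icc i j).card : ℝ) with hsdef
    set s' : ℝ := ((Finset.Icc i' j).card : ℝ) with hs'def
    set T : ℝ := ∑ t ∈ Finset.Icc i j, x t with hT
    set T' : ℝ := ∑ t ∈ Finset.Icc i' j, x t with hT'
    have hs'1 : (1:ℝ) ≤ s' := by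
      rw [hs'def]
      exact_mod_cast Nat.one_le_iff_ne_zero.mpr
        (Finset.card_ne_zero_of_mem (Finset.mem_Icc.mpr ⟨le_refl i', hi'j⟩))
    have hss' : s' ≤ s := by
      rw [hsdef, hs'def]
      exact_mod_cast Finset.card_le_card (Finset.Icc_subset_Icc (by omega) le_rfl)
    have hs0 : (0:ℝ) < s := lt_of_lt_of_le (by norm_num) (le_trans hs'1 hss')
    have hs'0 : (0:ℝ) < s' := lt_of_lt_of_le (by norm_num) hs'1
    have hunion : Finset.Ico i i' ∪ Finset.Icc i' j = Finset.Icc i j := by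
      rw [← Finset.Ico_add_one_right_eq_Icc, ← Finset.Ico_add_one_right_eq_Icc,
        Finset.Ico_union_Ico_eq_Ico h2 (by omega)]
    have hdisj : Disjoint (Finset.Ico i i') (Finset.Icc i' j) := by
      rw [Finset.disjoint_left]
      intro t ht ht'
      simp only [Finset.mem_Ico] at ht
      simp only [Finset.mem_Icc] at ht'
      omega
    have hsumsplit : (∑ t ∈ Finset.Ico i i', x t) + T' = T := by
      rw [hT, hT', ← hunion, Finset.sum_union hdisj]
    have hcardsplit : ((Finset.Ico i i').card : ℝ) + s' = s := by
      rw [hsdef, hs'def, ← hunion, Finset.card_union_of_disjoint hdisj]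
      push_cast
      ring
    set U : ℝ := ∑ t ∈ Finset.Ico i i', x t with hU
    set r : ℝ := ((Finset.Ico i i').card : ℝ) with hr
    have hr0 : (0:ℝ) ≤ r := by rw [hr]; positivity
    have hT'le : T' ≤ s' * y := by
      rw [hT', hs'def, hy]
      calc ∑ t ∈ Finset.Icc i' j, x t ≤ ∑ t ∈ Finset.Icc i' j, x (j + 1) := by
            apply Finset.sum_le_sum
            intro t ht
            simp only [Finset.mem_Icc] at ht
            exact hsort (by omega) (by omega) h4
        _ = ((Finset.Icc i' j).card : ℝ) * x (j + 1) := by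
            rw [Finset.sum_const, nsmul_eq_mul]
    have hT'ge : s' * x i' ≤ T' := by
      rw [hT', hs'def]
      calc ((Finset.Icc i' j).card : ℝ) * x i'
          = ∑ t ∈ Finset.Icc i' j, x i' := by rw [Finset.sum_const, nsmul_eq_mul]
        _ ≤ ∑ t ∈ Finset.Icc i' j, x t := by
            apply Finset.sum_le_sum
            intro t ht
            simp only [Finset.mem_Icc] at ht
            exact hsort (by omega) (by omega) (by omega)
    have hUle : U ≤ r * x i' := by
      rw [hU, hr]
      calc ∑ t ∈ Finset.Ico i i', x t ≤ ∑ t ∈ Finset.Ico i i', x i' := by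
            apply Finset.sum_le_sum
            intro t ht
            simp only [Finset.mem_Ico] at ht
            exact hsort (by omega) (by omega) (by omega)
        _ = ((Finset.Ico i i').card : ℝ) * x i' := by
            rw [Finset.sum_const, nsmul_eq_mul]
    have hQ'0 : 0 ≤ s' * y - T' := by linarith
    have hkey : (s' * y - T') * s ≤ (s * y - T) * s' := by
      have e1 : s = s' + r := by linarith
      have e2 : T = U + T' := by linarith
      rw [e1, e2]
      have b1 : r * T' ≤ r * (s' * y - s' * x i' + T') := by
        apply mul_le_mul_of_nonneg_left _ hr0
        nlinarith [hT'le, hT'ge]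
      nlinarith [mul_le_mul_of_nonneg_left hUle hs'0.le, b1]
    have hsq : ((s' * y - T') * s) ^ 2 ≤ ((s * y - T) * s') ^ 2 := by
      have h0 : 0 ≤ (s' * y - T') * s := mul_nonneg hQ'0 hs0.le
      nlinarith [hkey, h0]
    rw [div_le_div_iff₀ (by positivity) (by positivity)]
    have hQ's : (s' * y - T') ^ 2 * s ^ 2 ≤ (s * y - T) ^ 2 * s' ^ 2 := by
      linear_combination hsq
    have A := mul_le_mul_of_nonneg_right hQ's (show (0:ℝ) ≤ (s + 1) * s' by positivity)
    have hlin : (s + 1) * s' ≤ (s' + 1) * s := by nlinarith [hss']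
    have B := mul_le_mul_of_nonneg_left hlin
      (show (0:ℝ) ≤ (s * y - T) ^ 2 * s' ^ 2 by positivity)
    have C : (s' * y - T') ^ 2 * (s * (s + 1)) * (s * s')
        ≤ (s * y - T) ^ 2 * (s' * (s' + 1)) * (s * s') := by
      calc (s' * y - T') ^ 2 * (s * (s + 1)) * (s * s')
          = (s' * y - T') ^ 2 * s ^ 2 * ((s + 1) * s') := by ring
        _ ≤ (s * y - T) ^ 2 * s' ^ 2 * ((s + 1) * s') := A
        _ ≤ (s * y - T) ^ 2 * s' ^ 2 * ((s' + 1) * s) := B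
        _ = (s * y - T) ^ 2 * (s' * (s' + 1)) * (s * s') := by ring
    exact le_of_mul_le_mul_right C (by positivity)

lemma CC_QI (n : ℕ) (x : ℕ → ℝ)
    (hsort : ∀ ⦃p q : ℕ⦄, 1 ≤ p → p ≤ q → q ≤ n → x p ≤ x q)
    {u ℓ a w : ℕ} (h1 : 1 ≤ u) (h2 : u ≤ ℓ) (h3 : ℓ ≤ a + 1) (h4 : a ≤ w) (h5 : w ≤ n) :
    clusterCost x u a + clusterCost x ℓ w ≤ clusterCost x u w + clusterCost x ℓ a := by
  revert h5
  induction w, h4 using Nat.le_induction with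
  | base => intro _; linarith
  | succ w hw ih =>
    intro h5
    have hm := marginal_mono n x hsort (i := u) (i' := ℓ) (j := w) h1 h2 (by omega) h5
    have := ih (by omega)
    linarith

lemma kCost_le (x : ℕ → ℝ) (k m : ℕ) (b : ℕ → ℕ)
    (hb : Monotone b) (h0 : b 0 = 0) (hk : b k = m) :
    kCost x k m ≤ ∑ t ∈ Finset.range k, clusterCost x (b t + 1) (b (t + 1)) := by
  apply csInf_le
  · refine ⟨0, ?_⟩
    rintro c ⟨b', _, _, _, rfl⟩
    exact Finset.sum_nonneg fun t _ => CC_nonneg x _ _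
  · exact ⟨b, hb, h0, hk, rfl⟩

lemma kCost_exists (x : ℕ → ℝ) (k m : ℕ) (hk : 1 ≤ k) {ε : ℝ} (hε : 0 < ε) :
    ∃ b : ℕ → ℕ, Monotone b ∧ b 0 = 0 ∧ b k = m ∧
      ∑ t ∈ Finset.range k, clusterCost x (b t + 1) (b (t + 1)) < kCost x k m + ε := by
  have hne : { c : ℝ | ∃ b : ℕ → ℕ, Monotone b ∧ b 0 = 0 ∧ b k = m ∧
      c = ∑ t ∈ Finset.range k, clusterCost x (b t + 1) (b (t + 1)) }.Nonempty := by
    refine ⟨_, ⟨fun t => if t = 0 then 0 else m, ?_, by simp, ?_, rfl⟩⟩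
    · intro p q hpq
      by_cases hp : p = 0
      · simp [hp]
      · have hq : q ≠ 0 := by omega
        simp [hp, hq]
    · simp [Nat.one_le_iff_ne_zero.mp hk]
  have hlt : sInf { c : ℝ | ∃ b : ℕ → ℕ, Monotone b ∧ b 0 = 0 ∧ b k = m ∧
      c = ∑ t ∈ Finset.range k, clusterCost x (b t + 1) (b (t + 1)) } < kCost x k m + ε := by
    rw [show sInf _ = kCost x k m from rfl]
    linarith
  obtain ⟨c, hc, hclt⟩ := exists_lt_of_csInf_lt hne hlt
  obtain ⟨b, h1, h2, h3, rfl⟩ := hc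
  exact ⟨b, h1, h2, h3, hclt⟩

/-- For sorted reals `x_1 ≤ … ≤ x_n` and `i ≥ 2`, the matrix
`C_i[m][j] = D_{i−1}(min(j−1, m)) + CC(j, m)` is totally monotone with respect
to row minima: for rows `a < b` and columns `u < v`, if `C_i[a][v] < C_i[a][u]`
then `C_i[b][v] < C_i[b][u]`. -/
theorem costMatrix_totallyMonotone (n i : ℕ) (x : ℕ → ℝ)
    (hsort : ∀ ⦃p q : ℕ⦄, 1 ≤ p → p ≤ q → q ≤ n → x p ≤ x q)
    (hi : 2 ≤ i)
    (a b u v : ℕ) (ha : 1 ≤ a) (hab : a < b) (hbn : b ≤ n)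
    (hu : 1 ≤ u) (huv : u < v) (hvn : v ≤ n)
    (h : kCost x (i - 1) (min (v - 1) a) + clusterCost x v a
        < kCost x (i - 1) (min (u - 1) a) + clusterCost x u a) :
    kCost x (i - 1) (min (v - 1) b) + clusterCost x v b
      < kCost x (i - 1) (min (u - 1) b) + clusterCost x u b := by
  rcases le_or_gt v a with hva | hav
  · -- Case 1 : v ≤ a, pure quadrangle inequality
    rw [min_eq_left (by omega : v - 1 ≤ a), min_eq_left (by omega : u - 1 ≤ a)] at h
    rw [min_eq_left (by omega : v - 1 ≤ b), min_eq_left (by omega : u - 1 ≤ b)]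
    have QI := CC_QI n x hsort (u := u) (ℓ := v) (a := a) (w := b)
      hu huv.le (by omega) (by omega) hbn
    linarith
  · -- a < v
    have eCCva : clusterCost x v a = 0 := by
      rw [clusterCost, Finset.Icc_eq_empty (by omega)]; simp
    rw [min_eq_right (by omega : a ≤ v - 1), eCCva] at h
    rcases le_or_gt u a with hua | hau
    · -- main case : u ≤ a < v
      rw [min_eq_left (by omega : u - 1 ≤ a)] at h
      rw [min_eq_left (by omega : u - 1 ≤ b)]
      obtain ⟨k, hk⟩ : ∃ k', i - 1 = k' + 1 := ⟨i - 2, by omega⟩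
      rw [hk] at h ⊢
      set w : ℕ := min (v - 1) b with hwdef
      have haw : a ≤ w := le_min (by omega) (by omega)
      have hwb : w ≤ b := min_le_right _ _
      have hwv : w < v := by
        have := min_le_left (v - 1) b
        omega
      set ε : ℝ := (kCost x (k + 1) (u - 1) + clusterCost x u a - kCost x (k + 1) a) / 2
        with hεdef
      have hε : 0 < ε := by
        rw [hεdef]; linarith
      obtain ⟨c, hc, hc0, hck, hcost⟩ := kCost_exists x (k + 1) a (by omega) hε
      have hcka : c k ≤ a := by
        rw [← hck]; exact hc (by omega)
      rw [Finset.sum_range_succ, hck] at hcost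
      rcases lt_or_ge (c k + 1) u with hℓu | huℓ
      · -- last group of the near-optimal partition starts before u : contradiction
        exfalso
        have hD : kCost x (k + 1) (u - 1)
            ≤ ∑ t ∈ Finset.range (k + 1),
              clusterCost x (min (c t) (u - 1) + 1) (min (c (t + 1)) (u - 1)) := by
          apply kCost_le
          · exact hc.min monotone_const
          · simp [hc0]
          · rw [hck]; exact min_eq_right (by omega)
        have hsum : ∑ t ∈ Finset.range (k + 1),
              clusterCost x (min (c t) (u - 1) + 1) (min (c (t + 1)) (u - 1))
            = ∑ t ∈ Finset.range k, clusterCost x (c t + 1) (c (t + 1))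
              + clusterCost x (c k + 1) (u - 1) := by
          rw [Finset.sum_range_succ, hck]
          congr 1
          · apply Finset.sum_congr rfl
            intro t ht
            simp only [Finset.mem_range] at ht
            have h1 : c t ≤ u - 1 := le_trans (hc (by omega : t ≤ k)) (by omega)
            have h2 : c (t + 1) ≤ u - 1 := le_trans (hc (by omega : t + 1 ≤ k)) (by omega)
            rw [min_eq_left h1, min_eq_left h2]
          · rw [min_eq_left (by omega : c k ≤ u - 1), min_eq_right (by omega : u - 1 ≤ a)]
        have hsplit := CC_split x (p := c k + 1) (r := u - 1) (s := u) (q := a)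
          (by omega) (by omega) (by omega)
        rw [hsum] at hD
        rw [hεdef] at hcost
        linarith
      · -- last group starts at or after u
        have hD : kCost x (k + 1) w
            ≤ ∑ t ∈ Finset.range (k + 1),
              clusterCost x ((if t < k + 1 then c t else w) + 1)
                (if t + 1 < k + 1 then c (t + 1) else w) := by
          apply kCost_le
          · intro p q hpq
            dsimp only
            by_cases hq : q < k + 1
            · rw [if_pos (show p < k + 1 by omega), if_pos hq]
              exact hc hpq
            · by_cases hp : p < k + 1
              · rw [if_pos hp, if_neg hq]
                calc c p ≤ c (k + 1) := hc (by omega)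
                  _ = a := hck
                  _ ≤ w := haw
              · rw [if_neg hp, if_neg hq]
          · show (if 0 < k + 1 then c 0 else w) = 0
            rw [if_pos (by omega)]; exact hc0
          · show (if k + 1 < k + 1 then c (k + 1) else w) = w
            rw [if_neg (by omega)]
        have hsum : ∑ t ∈ Finset.range (k + 1),
              clusterCost x ((if t < k + 1 then c t else w) + 1)
                (if t + 1 < k + 1 then c (t + 1) else w)
            = ∑ t ∈ Finset.range k, clusterCost x (c t + 1) (c (t + 1))
              + clusterCost x (c k + 1) w := by
          rw [Finset.sum_range_succ]
          congr 1
          · apply Finset.sum_congr rfl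
            intro t ht
            simp only [Finset.mem_range] at ht
            rw [if_pos (by omega), if_pos (by omega)]
          · rw [if_pos (by omega), if_neg (by omega)]
        rw [hsum] at hD
        have QI := CC_QI n x hsort (u := u) (ℓ := c k + 1) (a := a) (w := w)
          hu huℓ (by omega) haw (le_trans hwb hbn)
        have hsplit2 := CC_split x (p := u) (r := w) (s := v) (q := b)
          hwv hwb (by omega)
        rw [hεdef] at hcost
        linarith
    · -- a < u < v : hypothesis is contradictory
      exfalso
      have eCCua : clusterCost x u a = 0 := by
        rw [clusterCost, Finset.Icc_eq_empty (by omega)]; simp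
      rw [min_eq_right (by omega : a ≤ u - 1), eCCua] at h
      exact absurd h (lt_irrefl _)
end

section
/- Let f : ℝ → ℝ be differentiable and strictly convex with Bregman divergence D_f, let x_1 ≤ x_2 ≤ … ≤ x_n be real numbers, and let k ≥ 1. The optimal 1D Bregman k-clustering cost equals the optimal cost over interval partitions: min over all sets M = {μ_1, …, μ_k} ⊂ ℝ of at most k centroids of ∑_{ℓ=1}^{n} min_{μ ∈ M} D_f(x_ℓ, μ) equals the minimum over all partitions of {1, …, n} into at most k consecutive intervals of the sum of the Bregman cluster costs CC_f of the intervals. -/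
/-!
Given centroids `M`, send each point to a nearest centroid. Since `D_f(v, a) - D_f(v, b)` is affine
in `v` with slope `f'(b) - f'(a)` and `f'` is strictly increasing, any such assignment is monotone
in the point, so on sorted data its fibres are at most `k` consecutive blocks; replacing the
centroid of each block by the block mean can only lower the cost. Conversely, the block means of an
interval partition form a set of at most `k` centroids whose cost is at most the partition cost.
-/

/-- The Bregman divergence induced by `f`: `D_f(x, y) = f x − f y − f'(y)(x − y)`. -/
noncomputable def bregman (f : ℝ → ℝ) (x y : ℝ) : ℝ :=
  f x - f y - deriv f y * (x - y)

/-- The Bregman cluster cost of grouping `x_i, …, x_j` into one cluster with the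
optimal centroid (the arithmetic mean); `0` when `i > j`. -/
noncomputable def bregmanClusterCost (f : ℝ → ℝ) (x : ℕ → ℝ) (i j : ℕ) : ℝ :=
  ∑ ℓ ∈ Finset.Icc i j,
    bregman f (x ℓ) ((∑ t ∈ Finset.Icc i j, x t) / ((Finset.Icc i j).card : ℝ))

/-- `bregmanKCost f x k m` is the minimum cost of partitioning `x_1, …, x_m`
into at most `k` consecutive groups, each charged its Bregman cluster cost. -/
noncomputable def bregmanKCost (f : ℝ → ℝ) (x : ℕ → ℝ) (k m : ℕ) : ℝ :=
  sInf { c : ℝ | ∃ b : ℕ → ℕ, Monotone b ∧ b 0 = 0 ∧ b k = m ∧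
    c = ∑ t ∈ Finset.range k, bregmanClusterCost f x (b t + 1) (b (t + 1)) }

open Finset

lemma bregman_nonneg {f : ℝ → ℝ} (hconv : ConvexOn ℝ Set.univ f) {y : ℝ}
    (hy : DifferentiableAt ℝ f y) (x : ℝ) : 0 ≤ bregman f x y := by
  rcases lt_trichotomy x y with hxy | rfl | hyx
  · have h := hconv.slope_le_deriv trivial trivial hxy hy
    rw [slope_def_field, div_le_iff₀ (sub_pos.2 hxy)] at h
    unfold bregman; nlinarith
  · simp [bregman]
  · have h := hconv.deriv_le_slope trivial trivial hyx hy
    rw [slope_def_field, le_div_iff₀ (sub_pos.2 hyx)] at h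
    unfold bregman; linarith

/-- The Bregman analogue of the parallel axis theorem. -/
lemma sum_bregman_eq_sum_bregman_mean_add (f : ℝ → ℝ) (x : ℕ → ℝ) (s : Finset ℕ) (μ : ℝ) :
    ∑ ℓ ∈ s, bregman f (x ℓ) μ =
      ∑ ℓ ∈ s, bregman f (x ℓ) ((∑ t ∈ s, x t) / #s) +
        #s * bregman f ((∑ t ∈ s, x t) / #s) μ := by
  rcases s.eq_empty_or_nonempty with rfl | hs
  · simp
  set m := (∑ t ∈ s, x t) / #s
  have hsum : ∑ t ∈ s, x t = #s * m := by
    rw [mul_div_cancel₀ _ (Nat.cast_ne_zero.2 hs.card_pos.ne')]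
  simp only [bregman, sum_sub_distrib, ← mul_sum, sum_const, nsmul_eq_mul]
  rw [hsum]
  ring

lemma bregmanClusterCost_le_sum_bregman {f : ℝ → ℝ} (hconv : ConvexOn ℝ Set.univ f) {μ : ℝ}
    (hμ : DifferentiableAt ℝ f μ) (x : ℕ → ℝ) (i j : ℕ) :
    bregmanClusterCost f x i j ≤ ∑ ℓ ∈ Icc i j, bregman f (x ℓ) μ := by
  rw [sum_bregman_eq_sum_bregman_mean_add, bregmanClusterCost, le_add_iff_nonneg_right]
  exact mul_nonneg (Nat.cast_nonneg _) (bregman_nonneg hconv hμ _)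

/-- The linear separator property. -/
lemma monotone_of_forall_bregman_le {f : ℝ → ℝ} (hdiff : Differentiable ℝ f)
    (hconv : StrictConvexOn ℝ Set.univ f) {M : Set ℝ} {c : ℝ → ℝ} (hcM : ∀ v, c v ∈ M)
    (hc : ∀ v, ∀ μ ∈ M, bregman f v (c v) ≤ bregman f v μ) : Monotone c := by
  intro v w hvw
  by_contra! hlt
  obtain rfl | hvw := hvw.eq_or_lt
  · exact lt_irrefl _ hlt
  have hv := hc v _ (hcM w)
  have hw := hc w _ (hcM v)
  have hderiv : deriv f (c w) < deriv f (c v) :=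
    hconv.strictMonoOn_deriv (fun y _ => hdiff y) trivial trivial hlt
  unfold bregman at hv hw
  nlinarith [mul_pos (sub_pos.2 hderiv) (sub_pos.2 hvw)]

section Rank

variable {α : Type*} [LinearOrder α] (s : Finset α)

lemma monotone_card_filter_lt : Monotone fun a => #{y ∈ s | y < a} :=
  fun _ _ hab => card_le_card (monotone_filter_right s fun _ _ hy => hy.trans_le hab)

lemma strictMonoOn_card_filter_lt : StrictMonoOn (fun a => #{y ∈ s | y < a}) s := by
  intro a ha b _ hab
  refine card_lt_card ((ssubset_iff_of_subset ?_).2 ⟨a, mem_filter.2 ⟨ha, hab⟩, by simp⟩)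
  exact monotone_filter_right s fun _ _ hy => hy.trans hab

lemma card_filter_lt_lt_card {a : α} (ha : a ∈ s) : #{y ∈ s | y < a} < #s :=
  card_lt_card (filter_ssubset.2 ⟨a, ha, lt_irrefl a⟩)

end Rank

lemma sum_Icc_one_eq_sum_range_sum_Icc {β : Type*} [AddCommMonoid β] (h : ℕ → β) {b : ℕ → ℕ}
    (hb : Monotone b) {n k : ℕ} (hb0 : b 0 = 0) (hbk : b k = n) :
    ∑ ℓ ∈ Icc 1 n, h ℓ = ∑ t ∈ range k, ∑ ℓ ∈ Icc (b t + 1) (b (t + 1)), h ℓ := by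
  subst hbk
  induction k with
  | zero => simp [hb0]
  | succ k ih =>
    have hIoc : ∀ m, Icc 1 m = Ioc 0 m := Icc_add_one_left_eq_Ioc 0
    rw [sum_range_succ, ← ih, Icc_add_one_left_eq_Ioc, hIoc, hIoc,
      sum_Ioc_consecutive _ (Nat.zero_le _) (hb k.le_succ)]

lemma exists_breakpoints_of_monotoneOn {φ : ℕ → ℕ} {n k : ℕ} (hφ : MonotoneOn φ (Set.Icc 1 n))
    (hφk : ∀ ℓ ∈ Icc 1 n, φ ℓ < k) :
    ∃ b : ℕ → ℕ, Monotone b ∧ b 0 = 0 ∧ b k = n ∧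
      ∀ t, ∀ ℓ ∈ Icc (b t + 1) (b (t + 1)), φ ℓ = t := by
  set b : ℕ → ℕ := fun t => {ℓ ∈ Icc 1 n | φ ℓ < t}.sup id
  have b_le : ∀ t, b t ≤ n := fun t => Finset.sup_le fun ℓ hℓ => (mem_Icc.1 (mem_filter.1 hℓ).1).2
  have le_b_iff : ∀ t, ∀ ℓ ∈ Icc 1 n, ℓ ≤ b t ↔ φ ℓ < t := by
    intro t ℓ hℓ
    rw [Finset.le_sup_iff (mem_Icc.1 hℓ).1]
    refine ⟨fun ⟨q, hq, hℓq⟩ => ?_, fun h => ⟨ℓ, mem_filter.2 ⟨hℓ, h⟩, le_rfl⟩⟩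
    obtain ⟨hq, hφq⟩ := mem_filter.1 hq
    exact (hφ (Set.mem_Icc.2 (mem_Icc.1 hℓ)) (Set.mem_Icc.2 (mem_Icc.1 hq)) hℓq).trans_lt hφq
  refine ⟨b, fun s t hst => sup_mono (monotone_filter_right _ fun _ _ h => h.trans_le hst),
    by simp [b], ?_, fun t ℓ hℓ => ?_⟩
  · refine (b_le k).antisymm ?_
    rcases n.eq_zero_or_pos with rfl | hn
    · exact Nat.zero_le _
    · exact (le_b_iff k n (mem_Icc.2 ⟨hn, le_rfl⟩)).2 (hφk n (mem_Icc.2 ⟨hn, le_rfl⟩))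
  · obtain ⟨hbℓ, hℓb⟩ := mem_Icc.1 hℓ
    have hℓn : ℓ ∈ Icc 1 n := mem_Icc.2 ⟨by omega, hℓb.trans (b_le _)⟩
    have hlt := (le_b_iff (t + 1) ℓ hℓn).1 hℓb
    have hge := mt (le_b_iff t ℓ hℓn).2 (by omega)
    omega

lemma exists_breakpoints_forall_eq_of_monotoneOn {α : Type*} [LinearOrder α] {g : ℕ → α}
    {n k : ℕ} (hg : MonotoneOn g (Set.Icc 1 n)) (hk : #((Icc 1 n).image g) ≤ k) :
    ∃ b : ℕ → ℕ, Monotone b ∧ b 0 = 0 ∧ b k = n ∧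
      ∀ t < k, ∀ ℓ ∈ Icc (b t + 1) (b (t + 1)), g ℓ = g (b t + 1) := by
  set S := (Icc 1 n).image g
  have hgS : ∀ ℓ ∈ Icc 1 n, g ℓ ∈ S := fun ℓ hℓ => mem_image_of_mem g hℓ
  obtain ⟨b, hb, hb0, hbk, hblock⟩ := exists_breakpoints_of_monotoneOn
    (φ := fun ℓ => #{y ∈ S | y < g ℓ})
    (fun p hp q hq hpq => monotone_card_filter_lt S (hg hp hq hpq))
    (fun ℓ hℓ => (card_filter_lt_lt_card S (hgS ℓ hℓ)).trans_le hk)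
  refine ⟨b, hb, hb0, hbk, fun t ht ℓ hℓ => ?_⟩
  have hbn : b (t + 1) ≤ n := hbk ▸ hb ht
  have hfirst : b t + 1 ∈ Icc (b t + 1) (b (t + 1)) :=
    mem_Icc.2 ⟨le_rfl, (mem_Icc.1 hℓ).1.trans (mem_Icc.1 hℓ).2⟩
  have hIcc : ∀ q ∈ Icc (b t + 1) (b (t + 1)), q ∈ Icc 1 n := fun q hq =>
    mem_Icc.2 ⟨by have := (mem_Icc.1 hq).1; omega, (mem_Icc.1 hq).2.trans hbn⟩
  exact (strictMonoOn_card_filter_lt S).injOn (hgS ℓ (hIcc ℓ hℓ)) (hgS _ (hIcc _ hfirst))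
    ((hblock t ℓ hℓ).trans (hblock t _ hfirst).symm)

noncomputable def bregmanCentroidCost (f : ℝ → ℝ) (x : ℕ → ℝ) (n : ℕ) (M : Finset ℝ) : ℝ :=
  ∑ ℓ ∈ Icc 1 n, sInf ((fun μ => bregman f (x ℓ) μ) '' (M : Set ℝ))

noncomputable def bregmanPartitionCost (f : ℝ → ℝ) (x : ℕ → ℝ) (k : ℕ) (b : ℕ → ℕ) : ℝ :=
  ∑ t ∈ range k, bregmanClusterCost f x (b t + 1) (b (t + 1))

lemma exists_bregmanCentroidCost_le_bregmanPartitionCost (f : ℝ → ℝ) (x : ℕ → ℝ) {n k : ℕ}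
    (hk : 1 ≤ k) {b : ℕ → ℕ} (hb : Monotone b) (hb0 : b 0 = 0) (hbk : b k = n) :
    ∃ M : Finset ℝ, M.Nonempty ∧ #M ≤ k ∧
      bregmanCentroidCost f x n M ≤ bregmanPartitionCost f x k b := by
  set mean : ℕ → ℝ := fun t =>
    (∑ ℓ ∈ Icc (b t + 1) (b (t + 1)), x ℓ) / #(Icc (b t + 1) (b (t + 1)))
  refine ⟨(range k).image mean, ⟨mean 0, mem_image_of_mem _ (mem_range.2 hk)⟩,
    card_image_le.trans (card_range k).le, ?_⟩
  rw [bregmanCentroidCost, sum_Icc_one_eq_sum_range_sum_Icc _ hb hb0 hbk]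
  refine sum_le_sum fun t ht => sum_le_sum fun ℓ _ => ?_
  exact csInf_le ((((range k).image mean).finite_toSet.image _).bddBelow)
    ⟨mean t, mem_image_of_mem _ ht, rfl⟩

lemma exists_bregmanPartitionCost_le_bregmanCentroidCost {f : ℝ → ℝ} (hdiff : Differentiable ℝ f)
    (hconv : StrictConvexOn ℝ Set.univ f) {n k : ℕ} {x : ℕ → ℝ} (hx : MonotoneOn x (Set.Icc 1 n))
    {M : Finset ℝ} (hM : M.Nonempty) (hMk : #M ≤ k) :
    ∃ b : ℕ → ℕ, Monotone b ∧ b 0 = 0 ∧ b k = n ∧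
      bregmanPartitionCost f x k b ≤ bregmanCentroidCost f x n M := by
  choose c hcM hc using fun v => M.exists_min_image (bregman f v) hM
  have hc_mono : Monotone c := monotone_of_forall_bregman_le hdiff hconv hcM hc
  have hc_sInf : ∀ v, sInf ((fun μ => bregman f v μ) '' (M : Set ℝ)) = bregman f v (c v) :=
    fun v => IsLeast.csInf_eq ⟨⟨c v, hcM v, rfl⟩, by rintro _ ⟨μ, hμ, rfl⟩; exact hc v μ hμ⟩
  obtain ⟨b, hb, hb0, hbk, hblock⟩ := exists_breakpoints_forall_eq_of_monotoneOn
    (g := fun ℓ => c (x ℓ)) (hc_mono.comp_monotoneOn hx)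
    ((card_le_card (image_subset_iff.2 fun ℓ _ => hcM (x ℓ))).trans hMk)
  refine ⟨b, hb, hb0, hbk, ?_⟩
  calc bregmanPartitionCost f x k b
      ≤ ∑ t ∈ range k, ∑ ℓ ∈ Icc (b t + 1) (b (t + 1)), bregman f (x ℓ) (c (x ℓ)) := by
        refine sum_le_sum fun t ht => ?_
        rw [sum_congr rfl fun ℓ hℓ => by rw [hblock t (mem_range.1 ht) ℓ hℓ]]
        exact bregmanClusterCost_le_sum_bregman hconv.convexOn (hdiff _) x _ _
    _ = bregmanCentroidCost f x n M := by
        rw [bregmanCentroidCost, sum_Icc_one_eq_sum_range_sum_Icc _ hb hb0 hbk]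
        simp only [hc_sInf]

/-- for a differentiable strictly convex `f : ℝ → ℝ`, sorted reals
`x_1 ≤ … ≤ x_n`, and `k ≥ 1`, the optimal 1D Bregman `k`-clustering cost — the
infimum over all nonempty sets `M` of at most `k` real centroids of
`∑_{ℓ=1}^{n} min_{μ ∈ M} D_f(x_ℓ, μ)` — equals the minimum over all partitions
of `{1, …, n}` into at most `k` consecutive intervals of the sum of the Bregman
cluster costs of the intervals. -/
theorem bregman_clustering_eq_interval_partition (f : ℝ → ℝ)
    (hdiff : Differentiable ℝ f) (hconv : StrictConvexOn ℝ Set.univ f)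
    (n k : ℕ) (x : ℕ → ℝ)
    (hsort : ∀ ⦃p q : ℕ⦄, 1 ≤ p → p ≤ q → q ≤ n → x p ≤ x q)
    (hk : 1 ≤ k) :
    sInf { c : ℝ | ∃ M : Finset ℝ, M.Nonempty ∧ M.card ≤ k ∧
        c = ∑ ℓ ∈ Finset.Icc 1 n, sInf ((fun μ => bregman f (x ℓ) μ) '' (M : Set ℝ)) }
      = bregmanKCost f x k n := by
  refine csInf_eq_csInf_of_forall_exists_le ?_ ?_
  · rintro _ ⟨M, hM, hMk, rfl⟩
    obtain ⟨b, hb, hb0, hbk, hle⟩ := exists_bregmanPartitionCost_le_bregmanCentroidCost hdiff hconv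
      (fun p hp q hq hpq => hsort hp.1 hpq hq.2) hM hMk
    exact ⟨_, ⟨b, hb, hb0, hbk, rfl⟩, hle⟩
  · rintro _ ⟨b, hb, hb0, hbk, rfl⟩
    obtain ⟨M, hM, hMk, hle⟩ := exists_bregmanCentroidCost_le_bregmanPartitionCost f x hk hb hb0 hbk
    exact ⟨_, ⟨M, hM, hMk, rfl⟩, hle⟩
end
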